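/- arXiv:math/0305023 — 3 statements merged into one kernel-verified Lean document; each statement's English description precedes it below -/
import Mathlib

section
/- Let V be a real inner product space of odd dimension 2n+1 ≥ 3, and let Γ be a subgroup of the group of linear isometries of V which acts freely on the unit sphere S = {v ∈ V : ‖v‖ = 1}, i.e. no element of Γ other than the identity fixes any point of S. Then Γ has at most two elements, and if Γ has exactly two elements, its nontrivial element is −id. (Hence, as Killing observed, in even dimensions the only spherical space forms are the sphere Sⁿ itself and real projective space ℝPⁿ.) -/
open Polynomial Filter

lemma odd_natDegree_exists_root (p : ℝ[X]) (hm : p.Monic) (ho : Odd p.natDegree) :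
    ∃ x : ℝ, p.IsRoot x := by
  have hd0 : p.natDegree ≠ 0 := by rintro h; simp [h] at ho
  have hdeg : 0 < p.degree := natDegree_pos_iff_degree_pos.mp (Nat.pos_of_ne_zero hd0)
  have htop : Tendsto (fun x => p.eval x) atTop atTop :=
    p.tendsto_atTop_of_leadingCoeff_nonneg hdeg (by rw [hm.leadingCoeff]; norm_num)
  set q : ℝ[X] := p.comp (-X) with hq
  have hqdeg : q.natDegree = p.natDegree := by
    rw [hq, natDegree_comp]; simp
  have hqlc : q.leadingCoeff = -1 := by
    rw [hq, leadingCoeff_comp (by simp)]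
    simp [hm.leadingCoeff, ho.neg_one_pow]
  have hqdeg' : 0 < q.degree := by
    rw [← natDegree_pos_iff_degree_pos, hqdeg]; exact Nat.pos_of_ne_zero hd0
  have hbot : Tendsto (fun x => q.eval x) atTop atBot :=
    q.tendsto_atBot_of_leadingCoeff_nonpos hqdeg' (by rw [hqlc]; norm_num)
  obtain ⟨x, hx1, hx2, hx3⟩ :=
    ((htop.eventually_ge_atTop 1).and ((hbot.eventually_le_atBot (-1)).and
      (eventually_ge_atTop (0:ℝ)))).exists
  have hqe : q.eval x = p.eval (-x) := by simp [hq, eval_comp]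
  have hle : -x ≤ x := by linarith
  have := intermediate_value_Icc hle p.continuousOn
  obtain ⟨μ, _, hμ⟩ := this (show (0:ℝ) ∈ Set.Icc (p.eval (-x)) (p.eval x) by
    constructor <;> [linarith [hqe ▸ hx2]; linarith])
  exact ⟨μ, hμ⟩

lemma exists_real_eigenvector {V : Type*} [NormedAddCommGroup V] [InnerProductSpace ℝ V]
    [FiniteDimensional ℝ V] (hodd : Odd (Module.finrank ℝ V)) (f : V →ₗ[ℝ] V) :
    ∃ (μ : ℝ) (v : V), v ≠ 0 ∧ f v = μ • v := by
  have h0 : 0 < Module.finrank ℝ V := by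
    rcases hodd with ⟨k, hk⟩; omega
  have := Module.finBasis ℝ V
  set b := Module.finBasis ℝ V
  set M := LinearMap.toMatrix b b f with hM
  have hcp : M.charpoly = f.charpoly := LinearMap.charpoly_toMatrix f b
  obtain ⟨μ, hμ⟩ := odd_natDegree_exists_root f.charpoly f.charpoly_monic
    (by rwa [f.charpoly_natDegree])
  -- det (μ • 1 - f) = 0
  have hdet : LinearMap.det (μ • (1 : V →ₗ[ℝ] V) - f) = 0 := by
    have h1 : (M.charpoly).eval μ = ((Matrix.charmatrix M).map (eval μ)).det := by
      rw [Matrix.charpoly, ← Polynomial.coe_evalRingHom, RingHom.map_det]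
      rfl
    have h2 : (Matrix.charmatrix M).map (eval μ) = μ • (1 : Matrix _ _ ℝ) - M := by
      ext i j
      by_cases h : i = j
      · subst h; simp [Matrix.charmatrix_apply_eq, Matrix.smul_apply, Matrix.one_apply]
      · simp [Matrix.charmatrix_apply_ne _ _ _ h, Matrix.smul_apply, Matrix.one_apply, h]
    have h3 : LinearMap.toMatrix b b (μ • (1 : V →ₗ[ℝ] V) - f) = μ • 1 - M := by
      simp [LinearMap.toMatrix_one, hM, map_sub, map_smul]
    rw [← LinearMap.det_toMatrix b, h3, ← h2, ← h1, hcp]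
    exact hμ
  obtain ⟨v, hv, hv0⟩ := (Submodule.ne_bot_iff _).mp
    (LinearMap.bot_lt_ker_of_det_eq_zero hdet).ne'
  refine ⟨μ, v, hv0, ?_⟩
  have := LinearMap.mem_ker.mp hv
  simp only [LinearMap.sub_apply, LinearMap.smul_apply, Module.End.one_apply] at this
  linear_combination (norm := module) -this

/-- If a subgroup `Γ` of the group of linear isometries of a real inner product space of
odd dimension `2n+1 ≥ 3` acts freely on the unit sphere, then `Γ` has at most two
elements, and its nontrivial element (if any) is `-id`.  Hence, as Killing observed, in
even dimensions the only spherical space forms are `Sⁿ` and `ℝPⁿ`. -/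
theorem free_subgroup_on_odd_dim_sphere_card_le_two
    (V : Type*) [NormedAddCommGroup V] [InnerProductSpace ℝ V] [FiniteDimensional ℝ V]
    (n : ℕ) (hn : 1 ≤ n) (hdim : Module.finrank ℝ V = 2 * n + 1)
    (Γ : Subgroup (V ≃ₗᵢ[ℝ] V))
    (hfree : ∀ γ ∈ Γ, ∀ v : V, ‖v‖ = 1 → γ v = v → γ = 1) :
    Nat.card Γ ≤ 2 ∧ ∀ γ ∈ Γ, γ ≠ 1 → ∀ v : V, γ v = -v := by
  classical
  have hodd : Odd (Module.finrank ℝ V) := by rw [hdim]; exact ⟨n, by ring⟩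
  have hkey : ∀ γ ∈ Γ, γ ≠ 1 → ∀ v : V, γ v = -v := by
    intro γ hγ hne
    obtain ⟨μ, v, hv0, hμv⟩ := exists_real_eigenvector hodd
      (γ.toLinearEquiv.toLinearMap)
    have hγv : γ v = μ • v := hμv
    have hnv : ‖v‖ ≠ 0 := norm_ne_zero_iff.mpr hv0
    set w : V := ‖v‖⁻¹ • v with hw
    have hw1 : ‖w‖ = 1 := by
      rw [hw, norm_smul, norm_inv, norm_norm, inv_mul_cancel₀ hnv]
    have hγw : γ w = μ • w := by
      rw [hw, map_smul, hγv, smul_comm]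
    have habs : |μ| = 1 := by
      have := γ.norm_map w
      rw [hγw, norm_smul, hw1, mul_one, Real.norm_eq_abs] at this
      exact this
    have hμ : μ = 1 ∨ μ = -1 := abs_eq (by norm_num : (0:ℝ) ≤ 1) |>.mp habs
    rcases hμ with h1 | h1
    · exact absurd (hfree γ hγ w hw1 (by rw [hγw, h1, one_smul])) hne
    · -- γ w = -w, so γ² = 1
      have hγw' : γ w = -w := by rw [hγw, h1, neg_one_smul]
      have hsq : γ * γ = 1 := by
        refine hfree (γ * γ) (mul_mem hγ hγ) w hw1 ?_
        show γ (γ w) = w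
        rw [hγw', map_neg, hγw', neg_neg]
      intro u
      by_contra hne'
      have hu0 : u + γ u ≠ 0 := fun h => hne' (eq_neg_of_add_eq_zero_right h)
      set s : V := u + γ u with hs
      have hns : ‖s‖ ≠ 0 := norm_ne_zero_iff.mpr hu0
      have hγs : γ s = s := by
        have h2 : γ (γ u) = u := by
          have := congrArg (fun g : V ≃ₗᵢ[ℝ] V => g u) hsq
          simpa using this
        rw [hs, map_add, h2, add_comm]
      have hws : γ (‖s‖⁻¹ • s) = ‖s‖⁻¹ • s := by rw [map_smul, hγs]
      have : γ = 1 := hfree γ hγ (‖s‖⁻¹ • s)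
        (by rw [norm_smul, norm_inv, norm_norm, inv_mul_cancel₀ hns]) hws
      exact hne this
  refine ⟨?_, hkey⟩
  have hinj : Function.Injective (fun g : Γ => ((g : V ≃ₗᵢ[ℝ] V) = 1 : Bool)) := by
    intro g₁ g₂ h
    simp only [decide_eq_decide] at h
    by_cases h1 : (g₁ : V ≃ₗᵢ[ℝ] V) = 1
    · exact Subtype.ext (h1.trans (h.mp h1).symm)
    · have h2 : (g₂ : V ≃ₗᵢ[ℝ] V) ≠ 1 := fun hh => h1 (h.mpr hh)
      have e1 := hkey g₁ g₁.2 h1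
      have e2 := hkey g₂ g₂.2 h2
      exact Subtype.ext (LinearIsometryEquiv.ext fun v => (e1 v).trans (e2 v).symm)
  calc Nat.card Γ ≤ Nat.card Bool := Nat.card_le_card_of_injective _ hinj
    _ = 2 := Nat.card_eq_two_iff' true |>.mpr ⟨false, by simp, fun b hb => by
        cases b <;> simp_all⟩
end

section
/- For every unit quaternion x, the orbit of x under left multiplication by the unit complex numbers inside ℍ, namely {(cos t + (sin t)·i) * x : t ∈ ℝ}, equals the intersection of the unit sphere S³ ⊂ ℍ with the two-dimensional real linear subspace of ℍ spanned by x and i * x. In particular, each such orbit (each Clifford parallel, i.e. each fiber of the Hopf fibration) is a great circle of S³. -/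
open Quaternion

/-- The imaginary unit `i` of Hamilton's quaternions. -/
def quatI : ℍ[ℝ] := ⟨0, 1, 0, 0⟩

/-- The unit quaternion `cos t + (sin t) · i`. -/
noncomputable def circleQuat (t : ℝ) : ℍ[ℝ] := ⟨Real.cos t, Real.sin t, 0, 0⟩

/-!
Since the quaternion norm is multiplicative, `‖a • x + b • (i * x)‖ = ‖(a + b i) x‖ = √(a² + b²) ‖x‖`.
Hence `x` and `i * x` are linearly independent, and for `‖x‖ = 1` a point `a • x + b • (i * x)` of
their span lies on `S³` exactly when `a² + b² = 1`, i.e. when `(a, b) = (cos t, sin t)` for some `t`.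
-/

theorem Real.exists_cos_eq_and_sin_eq {a b : ℝ} (h : a ^ 2 + b ^ 2 = 1) :
    ∃ t, Real.cos t = a ∧ Real.sin t = b := by
  have hz : ‖(a + b * Complex.I : ℂ)‖ = 1 := by rw [Complex.norm_add_mul_I, h, Real.sqrt_one]
  refine ⟨Complex.arg (a + b * Complex.I), ?_, ?_⟩
  · simpa [hz] using Complex.norm_mul_cos_arg (a + b * Complex.I)
  · simpa [hz] using Complex.norm_mul_sin_arg (a + b * Complex.I)

@[simp] lemma quatI_re : quatI.re = 0 := rfl
@[simp] lemma quatI_imI : quatI.imI = 1 := rfl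
@[simp] lemma quatI_imJ : quatI.imJ = 0 := rfl
@[simp] lemma quatI_imK : quatI.imK = 0 := rfl

lemma coe_add_smul_quatI_mul (a b : ℝ) (x : ℍ[ℝ]) :
    ((a : ℍ[ℝ]) + b • quatI) * x = a • x + b • (quatI * x) := by
  rw [add_mul, smul_mul_assoc, Quaternion.coe_mul_eq_smul]

lemma norm_coe_add_smul_quatI (a b : ℝ) : ‖(a : ℍ[ℝ]) + b • quatI‖ = √(a ^ 2 + b ^ 2) := by
  rw [norm_eq_sqrt_real_inner, inner_self, normSq_def']
  simp

lemma norm_smul_add_smul_quatI_mul (a b : ℝ) (x : ℍ[ℝ]) :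
    ‖a • x + b • (quatI * x)‖ = √(a ^ 2 + b ^ 2) * ‖x‖ := by
  rw [← coe_add_smul_quatI_mul, norm_mul, norm_coe_add_smul_quatI]

lemma circleQuat_mul (t : ℝ) (x : ℍ[ℝ]) :
    circleQuat t * x = Real.cos t • x + Real.sin t • (quatI * x) := by
  rw [← coe_add_smul_quatI_mul]
  congr 1
  ext <;> simp [circleQuat]

lemma linearIndependent_quatI_mul {x : ℍ[ℝ]} (hx : x ≠ 0) :
    LinearIndependent ℝ ![x, quatI * x] := by
  refine LinearIndependent.pair_iff.2 fun a b hab => ?_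
  have h := norm_smul_add_smul_quatI_mul a b x
  rw [hab, norm_zero, eq_comm, mul_eq_zero, norm_eq_zero, or_iff_left hx,
    Real.sqrt_eq_zero (by positivity)] at h
  constructor <;> nlinarith

lemma finrank_span_quatI_mul {x : ℍ[ℝ]} (hx : x ≠ 0) :
    Module.finrank ℝ (Submodule.span ℝ {x, quatI * x}) = 2 := by
  rw [← Matrix.range_cons_cons_empty, finrank_span_eq_card (linearIndependent_quatI_mul hx),
    Fintype.card_fin]

lemma setOf_circleQuat_mul_eq {x : ℍ[ℝ]} (hx : ‖x‖ = 1) :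
    {y : ℍ[ℝ] | ∃ t : ℝ, y = circleQuat t * x} =
      Metric.sphere (0 : ℍ[ℝ]) 1 ∩ (Submodule.span ℝ {x, quatI * x} : Set ℍ[ℝ]) := by
  ext y
  simp only [Set.mem_ofPred_eq, Set.mem_inter_iff, mem_sphere_zero_iff_norm, SetLike.mem_coe,
    Submodule.mem_span_pair]
  constructor
  · rintro ⟨t, rfl⟩
    rw [circleQuat_mul, norm_smul_add_smul_quatI_mul, hx, Real.cos_sq_add_sin_sq, Real.sqrt_one,
      mul_one]
    exact ⟨rfl, Real.cos t, Real.sin t, rfl⟩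
  · rintro ⟨hy, a, b, rfl⟩
    rw [norm_smul_add_smul_quatI_mul, hx, mul_one, Real.sqrt_eq_one] at hy
    obtain ⟨t, rfl, rfl⟩ := Real.exists_cos_eq_and_sin_eq hy
    exact ⟨t, (circleQuat_mul t x).symm⟩

/-- For every unit quaternion `x`, the orbit `{(cos t + sin t · i) * x : t ∈ ℝ}` of `x`
under left multiplication by the unit complex numbers inside `ℍ` equals the intersection
of the unit sphere `S³ ⊂ ℍ` with the two-dimensional real subspace spanned by `x` and
`i * x`.  In particular each such orbit (each Clifford parallel, i.e. each fiber of the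
Hopf fibration) is a great circle of `S³`. -/
theorem clifford_parallel_is_great_circle (x : ℍ[ℝ]) (hx : ‖x‖ = 1) :
    {y : ℍ[ℝ] | ∃ t : ℝ, y = circleQuat t * x} =
        Metric.sphere (0 : ℍ[ℝ]) 1 ∩
          (Submodule.span ℝ {x, quatI * x} : Set ℍ[ℝ]) ∧
      Module.finrank ℝ (Submodule.span ℝ {x, quatI * x}) = 2 :=
  ⟨setOf_circleQuat_mul_eq hx, finrank_span_quatI_mul (norm_ne_zero_iff.1 (hx ▸ one_ne_zero))⟩
end

section
/- The Hopf map induces a homeomorphism from the orbit space of the unit sphere S³ under the circle action onto the unit sphere S²: letting the circle group {λ ∈ ℂ : |λ| = 1} act on S³ = {(z,w) ∈ ℂ × ℂ : |z|² + |w|² = 1} by λ·(z,w) = (λz, λw), the map induced on the quotient space S³/S¹ by h(z,w) = (2·z·conj(w), |z|² − |w|²) is a homeomorphism onto S² = {(u,t) ∈ ℂ × ℝ : |u|² + t² = 1}. -/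
/-- The Hopf map `h(z,w) = (2·z·conj w, |z|² − |w|²)`. -/
noncomputable def hopfMap (p : ℂ × ℂ) : ℂ × ℝ :=
  (2 * p.1 * (starRingEnd ℂ) p.2, ‖p.1‖ ^ 2 - ‖p.2‖ ^ 2)

/-- The unit sphere `S³ ⊆ ℂ × ℂ`. -/
def sphereS3 : Set (ℂ × ℂ) := {p | ‖p.1‖ ^ 2 + ‖p.2‖ ^ 2 = 1}

/-- The unit sphere `S² ⊆ ℂ × ℝ`. -/
def sphereS2 : Set (ℂ × ℝ) := {q | ‖q.1‖ ^ 2 + q.2 ^ 2 = 1}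

/-- The orbit relation of the circle action `λ·(z,w) = (λz, λw)` on `S³`. -/
def hopfRel (p q : sphereS3) : Prop :=
  ∃ lam : ℂ, ‖lam‖ = 1 ∧
    (p : ℂ × ℂ) = (lam * (q : ℂ × ℂ).1, lam * (q : ℂ × ℂ).2)

/-!
The Hopf map is a continuous surjection `ℂ² → ℂ × ℝ ≅ ℝ³` satisfying
`|h(p)| = |p|²`, so it maps `S³` onto `S²`; it is constant on circle orbits, and conversely
two points with the same image differ by a unit phase (compare `z · conj w` and `|z|`, `|w|`).
Hence it descends to a continuous bijection from the compact orbit space `S³/S¹` onto the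
Hausdorff space `S²`, which is therefore a homeomorphism.
-/

open ComplexConjugate

theorem norm_sq_hopfMap_fst_add_sq (p : ℂ × ℂ) :
    ‖(hopfMap p).1‖ ^ 2 + (hopfMap p).2 ^ 2 = (‖p.1‖ ^ 2 + ‖p.2‖ ^ 2) ^ 2 := by
  simp only [hopfMap, norm_mul, Complex.norm_conj, Complex.norm_two]
  ring

theorem hopfMap_mem_sphereS2_iff {p : ℂ × ℂ} : hopfMap p ∈ sphereS2 ↔ p ∈ sphereS3 := by
  simp only [sphereS2, sphereS3, Set.mem_ofPred_eq, norm_sq_hopfMap_fst_add_sq]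
  exact pow_eq_one_iff_of_nonneg (by positivity) two_ne_zero

@[fun_prop]
theorem continuous_hopfMap : Continuous hopfMap := by
  unfold hopfMap
  fun_prop

theorem hopfMap_mul_left {lam : ℂ} (hlam : ‖lam‖ = 1) (p : ℂ × ℂ) :
    hopfMap (lam * p.1, lam * p.2) = hopfMap p := by
  have hlam' : lam * conj lam = 1 := by rw [Complex.mul_conj', hlam]; norm_num
  simp only [hopfMap, map_mul, norm_mul, hlam, one_mul, Prod.mk.injEq, and_true]
  linear_combination (2 * p.1 * conj p.2) * hlam'

theorem surjective_hopfMap : Function.Surjective hopfMap := by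
  rintro ⟨u, t⟩
  set s := √(‖u‖ ^ 2 + t ^ 2)
  have hs : s ^ 2 = ‖u‖ ^ 2 + t ^ 2 := Real.sq_sqrt (by positivity)
  have hts : t ≤ s := Real.le_sqrt_of_sq_le (by nlinarith [norm_nonneg u])
  rcases hts.lt_or_eq with hts | hts
  · set r := √((s - t) / 2)
    have hr : r ^ 2 = (s - t) / 2 := Real.sq_sqrt (by linarith)
    have hr0 : (r : ℂ) ≠ 0 := Complex.ofReal_ne_zero.2 (by positivity)
    refine ⟨(u / (2 * r), r), ?_⟩
    simp only [hopfMap, Complex.conj_ofReal, norm_div, norm_mul, Complex.norm_two,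
      Complex.norm_real, Real.norm_eq_abs, Prod.mk.injEq]
    constructor
    · field_simp
    · rw [div_pow, mul_pow, sq_abs, hr]
      field_simp
      nlinarith
  · have hu : u = 0 := by
      have : ‖u‖ ^ 2 = 0 := by rw [← hts] at hs; linarith
      simpa using this
    have ht : 0 ≤ t := hts ▸ Real.sqrt_nonneg _
    refine ⟨(√t, 0), ?_⟩
    simp [hopfMap, hu, Real.sq_sqrt ht]

theorem exists_eq_mul_of_mul_conj_eq {a b c d : ℂ} (hc : c ≠ 0) (hac : ‖a‖ = ‖c‖)
    (h : a * conj b = c * conj d) : ∃ lam : ℂ, ‖lam‖ = 1 ∧ a = lam * c ∧ b = lam * d := by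
  have ha : a ≠ 0 := norm_ne_zero_iff.1 (hac ▸ norm_ne_zero_iff.2 hc)
  refine ⟨a / c, by rw [norm_div, hac, div_self (norm_ne_zero_iff.2 hc)],
    (div_mul_cancel₀ a hc).symm, ?_⟩
  have h' : conj a * b = conj c * d := by simpa using congrArg conj h
  have hnorm : conj a * a = conj c * c := by rw [Complex.conj_mul', Complex.conj_mul', hac]
  rw [div_mul_eq_mul_div, eq_div_iff hc]
  -- `conj a · (c b) = c · conj c · d = conj a · a · d`
  apply mul_left_cancel₀ (map_ne_zero conj |>.2 ha)
  linear_combination c * h' - d * hnorm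

theorem exists_eq_mul_of_hopfMap_eq {p q : ℂ × ℂ} (h : hopfMap p = hopfMap q) :
    ∃ lam : ℂ, ‖lam‖ = 1 ∧ p = (lam * q.1, lam * q.2) := by
  have hprod : p.1 * conj p.2 = q.1 * conj q.2 := by
    have := congrArg Prod.fst h
    simp only [hopfMap, mul_assoc] at this
    exact mul_left_cancel₀ two_ne_zero this
  have hdiff : ‖p.1‖ ^ 2 - ‖p.2‖ ^ 2 = ‖q.1‖ ^ 2 - ‖q.2‖ ^ 2 := congrArg Prod.snd h
  have hsum : ‖p.1‖ ^ 2 + ‖p.2‖ ^ 2 = ‖q.1‖ ^ 2 + ‖q.2‖ ^ 2 := by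
    refine (pow_left_inj₀ (by positivity) (by positivity) two_ne_zero).1 ?_
    rw [← norm_sq_hopfMap_fst_add_sq, ← norm_sq_hopfMap_fst_add_sq, h]
  have h1 : ‖p.1‖ = ‖q.1‖ :=
    (pow_left_inj₀ (norm_nonneg _) (norm_nonneg _) two_ne_zero).1 (by linarith)
  have h2 : ‖p.2‖ = ‖q.2‖ :=
    (pow_left_inj₀ (norm_nonneg _) (norm_nonneg _) two_ne_zero).1 (by linarith)
  by_cases hq1 : q.1 = 0
  · by_cases hq2 : q.2 = 0
    · refine ⟨1, norm_one, ?_⟩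
      ext <;> simp_all
    · obtain ⟨lam, hlam, h2, h1⟩ := exists_eq_mul_of_mul_conj_eq hq2 h2
        (by simpa [mul_comm] using congrArg conj hprod)
      exact ⟨lam, hlam, Prod.ext h1 h2⟩
  · obtain ⟨lam, hlam, h1, h2⟩ := exists_eq_mul_of_mul_conj_eq hq1 h1 hprod
    exact ⟨lam, hlam, Prod.ext h1 h2⟩

theorem isCompact_sphereS3 : IsCompact sphereS3 := by
  refine Metric.isCompact_of_isClosed_isBounded (isClosed_eq (by fun_prop) continuous_const)
    ((Metric.isBounded_closedBall (x := 0) (r := 1)).subset ?_)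
  intro p (hp : ‖p.1‖ ^ 2 + ‖p.2‖ ^ 2 = 1)
  rw [Metric.mem_closedBall, dist_zero_right, Prod.norm_def, max_le_iff]
  constructor <;> nlinarith [norm_nonneg p.1, norm_nonneg p.2]

instance : CompactSpace sphereS3 := isCompact_iff_compactSpace.1 isCompact_sphereS3

noncomputable def hopfQuotMap : Quot hopfRel → sphereS2 :=
  Quot.lift (fun p ↦ ⟨hopfMap p, hopfMap_mem_sphereS2_iff.2 p.2⟩)
    fun _ _ ⟨_, hlam, hpq⟩ ↦
      Subtype.ext ((congrArg hopfMap hpq).trans (hopfMap_mul_left hlam _))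

theorem continuous_hopfQuotMap : Continuous hopfQuotMap :=
  continuous_quot_lift _ (by fun_prop)

theorem bijective_hopfQuotMap : Function.Bijective hopfQuotMap := by
  constructor
  · rintro ⟨p⟩ ⟨q⟩ h
    exact Quot.sound (exists_eq_mul_of_hopfMap_eq (congrArg Subtype.val h))
  · rintro ⟨q, hq⟩
    obtain ⟨p, rfl⟩ := surjective_hopfMap q
    exact ⟨Quot.mk _ ⟨p, hopfMap_mem_sphereS2_iff.1 hq⟩, rfl⟩

/-- The Hopf map induces a homeomorphism from the orbit space `S³/S¹` of the circle
action (with the quotient topology) onto the unit sphere `S²`. -/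
theorem hopfMap_quotient_homeomorph_sphere :
    ∃ e : Quot hopfRel ≃ₜ sphereS2,
      ∀ p : sphereS3, ((e (Quot.mk hopfRel p) : sphereS2) : ℂ × ℝ) = hopfMap (p : ℂ × ℂ) :=
  ⟨continuous_hopfQuotMap.homeoOfEquivCompactToT2 (f := .ofBijective _ bijective_hopfQuotMap),
    fun _ ↦ rfl⟩
end
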